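/- arXiv:2201.06576 — 2 statements merged into one kernel-verified Lean document; each statement's English description precedes it below -/
import Mathlib

section
/- Let μ be any probability measure on ℕ = {1,2,…} (no tail or aperiodicity assumption required), and let ∼ be the random equivalence relation generated by the associated coalescing renewal processes. Then for all i, j, k, ℓ ∈ ℤ, Cov[1_{{i∼j}}, 1_{{k∼ℓ}}] ≤ P(i ∼ j ∼ k ∼ ℓ). -/
open MeasureTheory ProbabilityTheory Filter Finset
open scoped ENNReal NNReal Topology Classical

noncomputable section

/-- A function `L` is slowly varying (at infinity) on `(0,∞)`:
it is positive there and `L(cx)/L(x) → 1` for every `c > 0`. -/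
def IsSlowlyVarying (L : ℝ → ℝ) : Prop :=
  (∀ x : ℝ, 0 < x → 0 < L x) ∧
    ∀ c : ℝ, 0 < c → Tendsto (fun x : ℝ => L (c * x) / L x) atTop (𝓝 1)

/-- `f(n) ~ g(n)` as `n → ∞`, i.e. `f n / g n → 1`. -/
def SeqAsymp (f g : ℕ → ℝ) : Prop := Tendsto (fun n => f n / g n) atTop (𝓝 1)

variable {Ω : Type} [MeasurableSpace Ω]

/-- Parent map of the Hammond–Sheffield random graph: the parent of `i` is `i - R i`. -/
def par (R : ℤ → Ω → ℕ) (ω : Ω) (i : ℤ) : ℤ := i - (R i ω : ℤ)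

/-- `i` and `j` lie in the same connected component of the random graph `G_μ`:
their ancestral lineages (iterates of the parent map) meet. -/
def rel (R : ℤ → Ω → ℕ) (ω : Ω) (i j : ℤ) : Prop :=
  ∃ m n : ℕ, (par R ω)^[m] i = (par R ω)^[n] j

/-- The renewal mass `q_n`: the probability that the ancestral lineage of `n`
passes through `0`; equivalently `P(∃ j ≥ 0, R̃₁ + ⋯ + R̃ⱼ = n)`. -/
def qrenew (P : Measure Ω) (R : ℤ → Ω → ℕ) (n : ℕ) : ℝ :=
  (P {ω | ∃ k : ℕ, (par R ω)^[k] (n : ℤ) = 0}).toReal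

/-- Standing assumptions on the step distribution `μ`: a probability measure on
`ℕ = {1,2,…}` with regularly varying tails `μ[n,∞) ~ n^{-α} L(n)` where `0 < α < 1/2`
and `L` slowly varying, and aperiodic (gcd of the support is `1`). -/
structure HSmu (μ : Measure ℕ) (α : ℝ) (L : ℝ → ℝ) : Prop where
  prob : IsProbabilityMeasure μ
  zero : μ {0} = 0
  alpha_pos : (0:ℝ) < α
  alpha_lt : α < 1/2
  slowly : IsSlowlyVarying L
  tail : Tendsto (fun n : ℕ => (μ {m : ℕ | n ≤ m}).toReal / ((n : ℝ) ^ (-α) * L n))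
      atTop (𝓝 1)
  aperiodic : ∀ d : ℕ, (∀ n : ℕ, μ {n} ≠ 0 → d ∣ n) → d = 1

/-- Standing assumptions on the random environment: `P` is a probability measure and
`(R i)_{i ∈ ℤ}` are i.i.d. with law `μ`. -/
structure HSgraph (P : Measure Ω) (μ : Measure ℕ) (R : ℤ → Ω → ℕ) : Prop where
  prob : IsProbabilityMeasure P
  meas : ∀ i, Measurable (R i)
  indep : iIndepFun R P
  law : ∀ i, Measure.map (R i) P = μ

/-- The strong renewal condition: `q_n ~ n^{α-1}/(Γ(α)Γ(1-α)L(n))`. -/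
def SRT (P : Measure Ω) (R : ℤ → Ω → ℕ) (α : ℝ) (L : ℝ → ℝ) : Prop :=
  SeqAsymp (qrenew P R)
    (fun n => (n : ℝ) ^ (α - 1) / (Real.Gamma α * Real.Gamma (1 - α) * L n))

/-- The constant `C_α = (Σ_{m≥0} q_m²)⁻¹ Γ(1-2α)/(Γ(α)Γ(1-α)³)`. -/
def Calpha (P : Measure Ω) (R : ℤ → Ω → ℕ) (α : ℝ) : ℝ :=
  (∑' m : ℕ, (qrenew P R m)^2)⁻¹ *
    (Real.Gamma (1 - 2*α) / (Real.Gamma α * Real.Gamma (1 - α)^3))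

/-! Splitting `{i ∼ j, k ∼ ℓ}` according to whether `j ∼ k`, it suffices to show
`P(i ∼ j, k ∼ ℓ, j ≁ k) ≤ P(i ∼ j) P(k ∼ ℓ)`. On that event the lineages of `i` and `j` never
touch those of `k` and `ℓ`. Revealing the first `N` steps of the lineages of `k` and `ℓ` reads the
variables `R v` only at the finite set `W` of visited sites, whereas "`i ∼ j` through lineages
avoiding `W`" is determined by the variables off `W`. Independence of the two families, summed
over the countably many possible revealed paths, gives the bound when `k` and `ℓ` meet within
`N` steps; then let `N → ∞`. -/

theorem Function.iterate_eq_of_eqOn {α : Type*} {f g : α → α} {U : Set α} (h : Set.EqOn f g U)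
    {x : α} {n : ℕ} (hx : ∀ t < n, f^[t] x ∈ U) : g^[n] x = f^[n] x := by
  induction n with
  | zero => rfl
  | succ n ih =>
    rw [Function.iterate_succ_apply', Function.iterate_succ_apply',
      ih fun t ht => hx t (by omega), h (hx n n.lt_succ_self)]

theorem measurableSet_biSup_comap_preimage_of_forall_eqOn {Ω ι β : Type*} [mβ : MeasurableSpace β]
    [Inhabited β] (X : ι → Ω → β) {U : Set ι} {S : Set (ι → β)} (hS : MeasurableSet S)
    (hSU : ∀ e e', (∀ v ∈ U, e v = e' v) → e ∈ S → e' ∈ S) :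
    MeasurableSet[⨆ v ∈ U, mβ.comap (X v)] ((fun ω v => X v ω) ⁻¹' S) := by
  let _ : MeasurableSpace Ω := ⨆ v ∈ U, mβ.comap (X v)
  let restrictU : Ω → ι → β := fun ω v => if v ∈ U then X v ω else default
  have hrestrict : Measurable restrictU := by
    refine measurable_pi_lambda _ fun v => ?_
    by_cases hv : v ∈ U
    · simp only [restrictU, hv, if_true]
      exact Measurable.of_comap_le (le_biSup (fun v => mβ.comap (X v)) hv)
    · simp only [restrictU, hv, if_false]
      exact measurable_const
  have hpre : (fun ω v => X v ω) ⁻¹' S = restrictU ⁻¹' S := by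
    ext ω
    have hagree : ∀ v ∈ U, X v ω = restrictU ω v := fun v hv => by simp [restrictU, hv]
    exact ⟨hSU _ _ hagree, hSU _ _ fun v hv => (hagree v hv).symm⟩
  rw [hpre]
  exact hrestrict hS

/-- A strong-Markov-type bound: the value `y` of `Y` is revealed by the variables at the sites
`W y`, while `E y` only involves the remaining variables. -/
theorem ProbabilityTheory.iIndepFun.measure_setOf_mem_le_mul {Ω ι β κ : Type*}
    [MeasurableSpace Ω] [mβ : MeasurableSpace β] [Countable κ] {P : Measure Ω}
    {X : ι → Ω → β} (hX : ∀ v, Measurable (X v)) (hind : iIndepFun X P)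
    (Y : Ω → κ) (W : κ → Set ι) (E : κ → Set Ω) (G : Set κ) (A : Set Ω)
    (hY : ∀ y, MeasurableSet[⨆ v ∈ W y, mβ.comap (X v)] (Y ⁻¹' {y}))
    (hE : ∀ y, MeasurableSet[⨆ v ∈ (W y)ᶜ, mβ.comap (X v)] (E y)) (hEA : ∀ y, E y ⊆ A) :
    P {ω | Y ω ∈ G ∧ ω ∈ E (Y ω)} ≤ P (Y ⁻¹' G) * P A := by
  have hfiber : ∀ y, MeasurableSet (Y ⁻¹' {y}) := fun y =>
    iSup₂_le (fun v _ => (hX v).comap_le) _ (hY y)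
  have hindep_fiber : ∀ y, P (Y ⁻¹' {y} ∩ E y) = P (Y ⁻¹' {y}) * P (E y) := fun y =>
    (Indep_iff _ _ _).1 (indep_biSup_compl (fun v => (hX v).comap_le) hind (W y)) _ _
      (hY y) (hE y)
  have hunion : {ω | Y ω ∈ G ∧ ω ∈ E (Y ω)} = ⋃ y : G, Y ⁻¹' {(y : κ)} ∩ E y := by
    ext ω
    simp
  calc P {ω | Y ω ∈ G ∧ ω ∈ E (Y ω)}
      ≤ ∑' y : G, P (Y ⁻¹' {(y : κ)} ∩ E y) := hunion ▸ measure_iUnion_le _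
    _ = ∑' y : G, P (Y ⁻¹' {(y : κ)}) * P (E y) := by simp only [hindep_fiber]
    _ ≤ ∑' y : G, P (Y ⁻¹' {(y : κ)}) * P A :=
        ENNReal.tsum_le_tsum fun y => mul_le_mul_right (measure_mono (hEA y)) _
    _ = P (Y ⁻¹' G) * P A := by
        rw [ENNReal.tsum_mul_right, tsum_measure_preimage_singleton G.to_countable
          fun y _ => hfiber y]

theorem rel_equivalence {Ω : Type} (R : ℤ → Ω → ℕ) (ω : Ω) : Equivalence (rel R ω) where
  refl _ := ⟨0, 0, rfl⟩
  symm := fun ⟨m, n, h⟩ => ⟨n, m, h.symm⟩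
  trans := fun ⟨m, n, h⟩ ⟨s, t, h'⟩ => ⟨s + m, n + t, by
    rw [Function.iterate_add_apply, h, ← Function.iterate_add_apply, add_comm s n,
      Function.iterate_add_apply, h', ← Function.iterate_add_apply]⟩

theorem measurable_par_iterate {R : ℤ → Ω → ℕ} (hR : ∀ v, Measurable (R v)) (x : ℤ) (n : ℕ) :
    Measurable fun ω => (par R ω)^[n] x := by
  induction n with
  | zero => exact measurable_const
  | succ n ih =>
    simp only [Function.iterate_succ_apply']
    have hstep : Measurable fun p : Ω × ℤ => par R p.1 p.2 :=
      measurable_from_prod_countable_left fun v =>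
        (measurable_from_nat (f := fun n : ℕ => v - (n : ℤ))).comp (hR v)
    exact hstep.comp (measurable_id.prodMk ih)

theorem measurableSet_rel {R : ℤ → Ω → ℕ} (hR : ∀ v, Measurable (R v)) (i j : ℤ) :
    MeasurableSet {ω | rel R ω i j} := by
  simp only [rel, Set.ofPred_exists]
  exact .iUnion fun m => .iUnion fun n =>
    measurableSet_eq_fun (measurable_par_iterate hR i m) (measurable_par_iterate hR j n)

theorem par_iterate_eq_of_eqOn {Ω : Type} {R : ℤ → Ω → ℕ} {ω ω' : Ω} {U : Set ℤ}
    (h : ∀ v ∈ U, R v ω = R v ω') {x : ℤ} {n : ℕ} (hx : ∀ t < n, (par R ω)^[t] x ∈ U) :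
    (par R ω')^[n] x = (par R ω)^[n] x :=
  Function.iterate_eq_of_eqOn (fun v hv => by simp only [par, h v hv]) hx

def lineage (R : ℤ → Ω → ℕ) (ω : Ω) (x : ℤ) (N : ℕ) : Fin (N + 1) → ℤ :=
  fun t => (par R ω)^[t] x

theorem measurable_lineage {R : ℤ → Ω → ℕ} (hR : ∀ v, Measurable (R v)) (x : ℤ) (N : ℕ) :
    Measurable fun ω => lineage R ω x N :=
  measurable_pi_lambda _ fun t => measurable_par_iterate hR x t

theorem lineage_eq_of_eqOn {Ω : Type} {R : ℤ → Ω → ℕ} {ω ω' : Ω} {x : ℤ} {N : ℕ}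
    {p : Fin (N + 1) → ℤ} (h : ∀ v ∈ Set.range p, R v ω = R v ω') (hp : lineage R ω x N = p) :
    lineage R ω' x N = p := by
  funext t
  rw [← hp]
  refine par_iterate_eq_of_eqOn h fun s hs => ⟨⟨s, by omega⟩, ?_⟩
  rw [← hp]
  rfl

theorem lineage_avoids_of_not_rel {Ω : Type} {R : ℤ → Ω → ℕ} {ω : Ω} {x y : ℤ}
    (h : ¬ rel R ω x y) (N s : ℕ) : (par R ω)^[s] x ∉ Set.range (lineage R ω y N) :=
  fun ⟨t, ht⟩ => h ⟨s, t, ht.symm⟩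

theorem measurableSet_lineage_pair_eq {Ω : Type} (R : ℤ → Ω → ℕ) (k l : ℤ) (N : ℕ)
    (y : (Fin (N + 1) → ℤ) × (Fin (N + 1) → ℤ)) :
    MeasurableSet[⨆ v ∈ Set.range y.1 ∪ Set.range y.2, MeasurableSpace.comap (R v) inferInstance]
      {ω | (lineage R ω k N, lineage R ω l N) = y} := by
  refine measurableSet_biSup_comap_preimage_of_forall_eqOn R (S := {e |
    (lineage Function.eval e k N, lineage Function.eval e l N) = y}) ?_ fun e e' h he => ?_
  · have hev : ∀ v, Measurable (Function.eval v : (ℤ → ℕ) → ℕ) := measurable_pi_apply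
    exact (measurable_lineage hev k N).prodMk (measurable_lineage hev l N)
      (measurableSet_singleton y)
  · rw [Set.mem_ofPred_eq, Prod.ext_iff] at he ⊢
    exact ⟨lineage_eq_of_eqOn (fun v hv => h v (.inl hv)) he.1,
      lineage_eq_of_eqOn (fun v hv => h v (.inr hv)) he.2⟩

theorem measurableSet_rel_avoiding {Ω : Type} (R : ℤ → Ω → ℕ) (i j : ℤ) (W : Set ℤ) :
    MeasurableSet[⨆ v ∈ Wᶜ, MeasurableSpace.comap (R v) inferInstance]
      {ω | rel R ω i j ∧ ∀ s, (par R ω)^[s] i ∉ W ∧ (par R ω)^[s] j ∉ W} := by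
  refine measurableSet_biSup_comap_preimage_of_forall_eqOn R (S := {e |
    rel Function.eval e i j ∧
      ∀ s, (par Function.eval e)^[s] i ∉ W ∧ (par Function.eval e)^[s] j ∉ W}) ?_
    fun e e' h ⟨⟨m, n, hmn⟩, havoid⟩ => ?_
  · have hev : ∀ v, Measurable (Function.eval v : (ℤ → ℕ) → ℕ) := measurable_pi_apply
    simp only [Set.ofPred_and, Set.ofPred_forall]
    exact (measurableSet_rel hev i j).inter (.iInter fun s =>
      (measurable_par_iterate hev i s (.of_discrete (s := Wᶜ))).inter
        (measurable_par_iterate hev j s (.of_discrete (s := Wᶜ))))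
  · have hi : ∀ s, (par Function.eval e')^[s] i = (par Function.eval e)^[s] i := fun s =>
      par_iterate_eq_of_eqOn h fun t _ => (havoid t).1
    have hj : ∀ s, (par Function.eval e')^[s] j = (par Function.eval e)^[s] j := fun s =>
      par_iterate_eq_of_eqOn h fun t _ => (havoid t).2
    exact ⟨⟨m, n, by rw [hi, hj, hmn]⟩, fun s => by rw [hi, hj]; exact havoid s⟩

theorem measure_rel_meet_within_sdiff_le {P : Measure Ω} {R : ℤ → Ω → ℕ}
    (hR : ∀ v, Measurable (R v)) (hind : iIndepFun R P) (i j k l : ℤ) (N : ℕ) :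
    P {ω | rel R ω i j ∧ (∃ m ≤ N, ∃ n ≤ N, (par R ω)^[m] k = (par R ω)^[n] l) ∧
        ¬ rel R ω j k}
      ≤ P {ω | rel R ω k l} * P {ω | rel R ω i j} := by
  let Y := fun ω => (lineage R ω k N, lineage R ω l N)
  let W := fun y : (Fin (N + 1) → ℤ) × (Fin (N + 1) → ℤ) => Set.range y.1 ∪ Set.range y.2
  let E := fun y => {ω | rel R ω i j ∧ ∀ s, (par R ω)^[s] i ∉ W y ∧ (par R ω)^[s] j ∉ W y}
  let G : Set ((Fin (N + 1) → ℤ) × (Fin (N + 1) → ℤ)) := {y | ∃ m n, y.1 m = y.2 n}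
  have hsub : {ω | rel R ω i j ∧ (∃ m ≤ N, ∃ n ≤ N, (par R ω)^[m] k = (par R ω)^[n] l) ∧
      ¬ rel R ω j k} ⊆ {ω | Y ω ∈ G ∧ ω ∈ E (Y ω)} := by
    rintro ω ⟨hij, ⟨m, hm, n, hn, hmn⟩, hjk⟩
    have r := rel_equivalence R ω
    have hkl : rel R ω k l := ⟨m, n, hmn⟩
    have hik : ¬ rel R ω i k := fun h => hjk (r.trans (r.symm hij) h)
    have hjl : ¬ rel R ω j l := fun h => hjk (r.trans h (r.symm hkl))
    have hil : ¬ rel R ω i l := fun h => hjl (r.trans (r.symm hij) h)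
    refine ⟨⟨⟨m, by omega⟩, ⟨n, by omega⟩, hmn⟩, hij, fun s => ?_⟩
    simp only [W, Y, Set.mem_union, not_or]
    exact ⟨⟨lineage_avoids_of_not_rel hik N s, lineage_avoids_of_not_rel hil N s⟩,
      lineage_avoids_of_not_rel hjk N s, lineage_avoids_of_not_rel hjl N s⟩
  calc _ ≤ P {ω | Y ω ∈ G ∧ ω ∈ E (Y ω)} := measure_mono hsub
    _ ≤ P (Y ⁻¹' G) * P {ω | rel R ω i j} :=
        hind.measure_setOf_mem_le_mul hR Y W E G _ (measurableSet_lineage_pair_eq R k l N)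
          (fun y => measurableSet_rel_avoiding R i j (W y)) fun _ _ h => h.1
    _ ≤ P {ω | rel R ω k l} * P {ω | rel R ω i j} :=
        mul_le_mul_left (measure_mono fun _ ⟨m, n, h⟩ => ⟨m, n, h⟩ :
          P (Y ⁻¹' G) ≤ P {ω | rel R ω k l}) _

theorem measure_rel_sdiff_le {P : Measure Ω} {R : ℤ → Ω → ℕ} (hR : ∀ v, Measurable (R v))
    (hind : iIndepFun R P) (i j k l : ℤ) :
    P ({ω | rel R ω i j ∧ rel R ω k l} \ {ω | rel R ω j k})
      ≤ P {ω | rel R ω k l} * P {ω | rel R ω i j} := by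
  let S : ℕ → Set Ω := fun N => {ω | rel R ω i j ∧
    (∃ m ≤ N, ∃ n ≤ N, (par R ω)^[m] k = (par R ω)^[n] l) ∧ ¬ rel R ω j k}
  have hS : Monotone S := fun N M hNM ω ⟨hij, ⟨m, hm, n, hn, hmn⟩, hjk⟩ =>
    ⟨hij, ⟨m, hm.trans hNM, n, hn.trans hNM, hmn⟩, hjk⟩
  have hunion : {ω | rel R ω i j ∧ rel R ω k l} \ {ω | rel R ω j k} = ⋃ N, S N := by
    ext ω
    simp only [S, Set.mem_sdiff, Set.mem_ofPred_eq, Set.mem_iUnion]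
    constructor
    · rintro ⟨⟨hij, m, n, hmn⟩, hjk⟩
      exact ⟨max m n, hij, ⟨m, le_max_left m n, n, le_max_right m n, hmn⟩, hjk⟩
    · rintro ⟨N, hij, ⟨m, -, n, -, hmn⟩, hjk⟩
      exact ⟨⟨hij, m, n, hmn⟩, hjk⟩
  rw [hunion, hS.measure_iUnion]
  exact iSup_le (measure_rel_meet_within_sdiff_le hR hind i j k l)

theorem covariance_indicator_le_general
    {Ω : Type} [MeasurableSpace Ω] (P : Measure Ω)
    (R : ℤ → Ω → ℕ)
    (hP : IsProbabilityMeasure P)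
    (hmeas : ∀ i, Measurable (R i))
    (hindep : iIndepFun R P)
    (i j k l : ℤ) :
    (P {ω | rel R ω i j ∧ rel R ω k l}).toReal -
        (P {ω | rel R ω i j}).toReal * (P {ω | rel R ω k l}).toReal
      ≤ (P {ω | rel R ω i j ∧ rel R ω j k ∧ rel R ω k l}).toReal := by
  have hsplit := measureReal_inter_add_sdiff (μ := P) (s := {ω | rel R ω i j ∧ rel R ω k l})
    (measurableSet_rel hmeas j k)
  have hinter : {ω | rel R ω i j ∧ rel R ω k l} ∩ {ω | rel R ω j k}
      = {ω | rel R ω i j ∧ rel R ω j k ∧ rel R ω k l} := by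
    ext ω
    simp only [Set.mem_inter_iff, Set.mem_ofPred_eq]
    tauto
  have hcore := ENNReal.toReal_mono (by finiteness) (measure_rel_sdiff_le hmeas hindep i j k l)
  rw [ENNReal.toReal_mul] at hcore
  rw [hinter] at hsplit
  simp only [measureReal_def] at hsplit
  linarith

/-- **Lemma (covariance estimate).** For any probability measure `μ` on `ℕ = {1,2,…}` and
the random equivalence relation `∼` generated by the coalescing renewal processes,
`Cov[1_{i∼j}, 1_{k∼ℓ}] = P(i∼j, k∼ℓ) - P(i∼j)P(k∼ℓ) ≤ P(i∼j∼k∼ℓ)` for all `i,j,k,ℓ ∈ ℤ`. -/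
theorem covariance_indicator_le
    {Ω : Type} [MeasurableSpace Ω] (P : Measure Ω) (μ : Measure ℕ)
    (R : ℤ → Ω → ℕ)
    (hP : IsProbabilityMeasure P) (hμprob : IsProbabilityMeasure μ) (hμ0 : μ {0} = 0)
    (hmeas : ∀ i, Measurable (R i))
    (hindep : iIndepFun R P)
    (hlaw : ∀ i, Measure.map (R i) P = μ)
    (i j k l : ℤ) :
    (P {ω | rel R ω i j ∧ rel R ω k l}).toReal -
        (P {ω | rel R ω i j}).toReal * (P {ω | rel R ω k l}).toReal
      ≤ (P {ω | rel R ω i j ∧ rel R ω j k ∧ rel R ω k l}).toReal :=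
  covariance_indicator_le_general P R hP hmeas hindep i j k l

end
end

section
/- Let μ be any probability measure on ℕ = {1,2,…}, and let ∼ be the random equivalence relation generated by the associated coalescing renewal processes. Then for pairwise distinct i, j, k, ℓ ∈ ℤ, P( i ∼ k, j ∼ ℓ, and the component containing i and k is distinct from the component containing j and ℓ ) ≤ P(i ∼ k) · P(j ∼ ℓ). -/
open MeasureTheory ProbabilityTheory Filter Finset
open scoped ENNReal NNReal Topology Classical

noncomputable section

variable {Ω : Type} [MeasurableSpace Ω]

/-!
The argument is a van den Berg–Kesten type inequality. Follow the lineages of `i` and `k`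
until they first meet; the pair `γ` of lineage segments so obtained is a finite witness of
`i ∼ k`. The event that `γ` is an initial piece of the two lineages depends only on the `R v`
with `v ∈ γ`, and, since lineages never go up, distinct witnesses give disjoint events. On
the event `i ∼ k ≁ j ∼ ℓ` the lineages of `j` and `ℓ` meet without visiting any vertex of `γ`
(those all lie in the component of `k`), an event depending only on the `R v` with `v ∉ γ`.
Independence and a sum over `γ` give the bound.
-/

section FirstMeeting

variable {α : Type*} (p : α → α)

/-- Both non-meeting conditions are needed for uniqueness (`IsFirstMeeting.unique`) once `p`
may have fixed points. -/
def IsFirstMeeting (x y : α) (m n : ℕ) : Prop :=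
  p^[m] x = p^[n] y ∧ (∀ s < m, ∀ t ≤ n, p^[s] x ≠ p^[t] y) ∧ ∀ s ≤ m, ∀ t < n, p^[s] x ≠ p^[t] y

variable {p} {x y : α}

theorem exists_isFirstMeeting (h : ∃ m n, p^[m] x = p^[n] y) :
    ∃ m n, IsFirstMeeting p x y m n := by
  classical
  let m := Nat.find h
  have hm : ∃ n, p^[m] x = p^[n] y := Nat.find_spec h
  refine ⟨m, Nat.find hm, Nat.find_spec hm, fun s hs t _ hst => Nat.find_min h hs ⟨t, hst⟩,
    fun s hs t ht hst => ?_⟩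
  rcases hs.lt_or_eq with hs | rfl
  · exact Nat.find_min h hs ⟨t, hst⟩
  · exact Nat.find_min hm ht hst

theorem IsFirstMeeting.le_left [PartialOrder α] (hp : p ≤ id) {m n m' n' : ℕ}
    (h : IsFirstMeeting p x y m n) (h' : IsFirstMeeting p x y m' n') : m ≤ m' := by
  by_contra! hlt
  have hn : n ≤ n' := by
    by_contra! hn
    exact h.2.1 m' hlt n' hn.le h'.1
  -- `p` is deflationary: `p^[m] x ≤ p^[m'] x = p^[n'] y ≤ p^[n] y = p^[m] x`.
  have hle : p^[m] x ≤ p^[m'] x := Function.antitone_iterate_of_le_id hp hlt.le x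
  have hge : p^[m'] x ≤ p^[m] x := by
    rw [h'.1, h.1]; exact Function.antitone_iterate_of_le_id hp hn y
  exact h.2.1 m' hlt n le_rfl ((le_antisymm hge hle).trans h.1)

theorem IsFirstMeeting.unique [PartialOrder α] (hp : p ≤ id) {m n m' n' : ℕ}
    (h : IsFirstMeeting p x y m n) (h' : IsFirstMeeting p x y m' n') : m = m' ∧ n = n' := by
  obtain rfl := (h.le_left hp h').antisymm (h'.le_left hp h)
  refine ⟨rfl, le_antisymm ?_ ?_⟩
  · exact not_lt.mp fun hlt => h.2.2 m le_rfl n' hlt h'.1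
  · exact not_lt.mp fun hlt => h'.2.2 m le_rfl n hlt h.1

end FirstMeeting

section OrbitSegment

variable {α : Type*} {p : α → α} {x y : α}

def IsOrbitSegment (p : α → α) (l : List α) : Prop := l.IsChain fun u v => p u = v

theorem isOrbitSegment_iterate (p : α → α) (x : α) (n : ℕ) :
    IsOrbitSegment p (List.iterate p x n) := by
  rw [IsOrbitSegment, List.isChain_iff_getElem]
  intro s hs
  simp [Function.iterate_succ_apply']

theorem IsOrbitSegment.eq_iterate {l : List α} (h : IsOrbitSegment p l) (hx : l.head? = some x) :
    l = List.iterate p x l.length := by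
  obtain ⟨t, rfl⟩ := List.head?_eq_some_iff.mp hx
  refine List.ext_getElem (by simp) fun s hs _ => ?_
  rw [← h.iterate_eq_of_apply_eq s hs, List.getElem_iterate]
  rfl

structure IsMeetingWitness (x y : α) (γ : List α × List α) : Prop where
  head?_fst : γ.1.head? = some x
  head?_snd : γ.2.head? = some y
  getLast?_eq : γ.1.getLast? = γ.2.getLast?
  disjoint_dropLast_left : γ.1.dropLast.Disjoint γ.2
  disjoint_dropLast_right : γ.1.Disjoint γ.2.dropLast

theorem List.disjoint_iterate_iff {m n : ℕ} :
    (List.iterate p x m).Disjoint (List.iterate p y n) ↔ ∀ s < m, ∀ t < n, p^[s] x ≠ p^[t] y := by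
  constructor
  · intro h s hs t ht hst
    exact h (List.mem_iterate.mpr ⟨s, hs, rfl⟩) (List.mem_iterate.mpr ⟨t, ht, hst⟩)
  · rintro h a ha ha'
    obtain ⟨s, hs, rfl⟩ := List.mem_iterate.mp ha
    obtain ⟨t, ht, hst⟩ := List.mem_iterate.mp ha'
    exact h s hs t ht hst

theorem List.dropLast_iterate_succ (p : α → α) (x : α) (n : ℕ) :
    (List.iterate p x (n + 1)).dropLast = List.iterate p x n := by
  rw [List.iterate_add]; simp

theorem List.getLast?_iterate_succ (p : α → α) (x : α) (n : ℕ) :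
    (List.iterate p x (n + 1)).getLast? = some (p^[n] x) := by
  rw [List.iterate_add]; simp

theorem isMeetingWitness_iterate_iff {m n : ℕ} :
    IsMeetingWitness x y (List.iterate p x (m + 1), List.iterate p y (n + 1)) ↔
      IsFirstMeeting p x y m n := by
  simp only [IsFirstMeeting, ← Nat.lt_add_one_iff]
  constructor
  · rintro ⟨-, -, hlast, hl, hr⟩
    simp only [List.getLast?_iterate_succ, Option.some_inj] at hlast
    rw [List.dropLast_iterate_succ, List.disjoint_iterate_iff] at hl hr
    exact ⟨hlast, hl, hr⟩
  · rintro ⟨heq, hl, hr⟩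
    refine ⟨by simp, by simp, by simp only [List.getLast?_iterate_succ, heq], ?_, ?_⟩ <;>
      rwa [List.dropLast_iterate_succ, List.disjoint_iterate_iff]

theorem IsMeetingWitness.exists_eq_iterate {γ : List α × List α} (hγ : IsMeetingWitness x y γ)
    (hp : IsOrbitSegment p γ.1 ∧ IsOrbitSegment p γ.2) :
    ∃ m n, γ = (List.iterate p x (m + 1), List.iterate p y (n + 1)) ∧
      IsFirstMeeting p x y m n := by
  obtain ⟨xs, hxs⟩ := List.head?_eq_some_iff.mp hγ.head?_fst
  obtain ⟨ys, hys⟩ := List.head?_eq_some_iff.mp hγ.head?_snd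
  have hγ_eq : γ = (List.iterate p x (xs.length + 1), List.iterate p y (ys.length + 1)) := by
    rw [Prod.ext_iff, hp.1.eq_iterate hγ.head?_fst, hp.2.eq_iterate hγ.head?_snd, hxs, hys]
    simp
  rw [hγ_eq, isMeetingWitness_iterate_iff] at hγ
  exact ⟨_, _, hγ_eq, hγ⟩

theorem IsMeetingWitness.eq_of_isOrbitSegment [PartialOrder α] (hp : p ≤ id)
    {γ γ' : List α × List α} (hγ : IsMeetingWitness x y γ) (hγ' : IsMeetingWitness x y γ')
    (h : IsOrbitSegment p γ.1 ∧ IsOrbitSegment p γ.2)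
    (h' : IsOrbitSegment p γ'.1 ∧ IsOrbitSegment p γ'.2) : γ = γ' := by
  obtain ⟨m, n, rfl, hmn⟩ := hγ.exists_eq_iterate h
  obtain ⟨m', n', rfl, hmn'⟩ := hγ'.exists_eq_iterate h'
  obtain ⟨rfl, rfl⟩ := hmn.unique hp hmn'
  rfl

def sites (γ : List α × List α) : Set α := {v | v ∈ γ.1 ∨ v ∈ γ.2}

end OrbitSegment

section DisjointOccurrence

open Function

variable {Ω ι : Type*} {β : ι → Type*} [∀ v, MeasurableSpace (β v)]

abbrev sigmaOn (X : ∀ v, Ω → β v) (S : Set ι) : MeasurableSpace Ω :=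
  ⨆ v ∈ S, MeasurableSpace.comap (X v) inferInstance

variable {X : ∀ v, Ω → β v}

theorem sigmaOn_le [MeasurableSpace Ω] (hX : ∀ v, Measurable (X v)) (S : Set ι) :
    sigmaOn X S ≤ ‹MeasurableSpace Ω› :=
  iSup₂_le fun v _ => (hX v).comap_le

theorem measurableSet_sigmaOn_preimage {v : ι} {S : Set ι} (hv : v ∈ S) {A : Set (β v)}
    (hA : MeasurableSet A) : MeasurableSet[sigmaOn X S] (X v ⁻¹' A) :=
  le_biSup (fun v => MeasurableSpace.comap (X v) inferInstance) hv _ ⟨A, hA, rfl⟩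

theorem measure_iUnion_inter_le_mul {Γ : Type*} [Countable Γ] [MeasurableSpace Ω]
    {P : Measure Ω} (hX : ∀ v, Measurable (X v)) (hind : iIndepFun X P)
    {F : Γ → Set ι} {E B : Γ → Set Ω}
    (hE : ∀ γ, MeasurableSet[sigmaOn X (F γ)] (E γ))
    (hB : ∀ γ, MeasurableSet[sigmaOn X (F γ)ᶜ] (B γ)) (hdisj : Pairwise (Disjoint on E))
    {A C : Set Ω} (hEA : ∀ γ, E γ ⊆ A) (hBC : ∀ γ, B γ ⊆ C) :
    P (⋃ γ, E γ ∩ B γ) ≤ P A * P C := by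
  have := hind.isProbabilityMeasure
  have hsplit (γ : Γ) : P (E γ ∩ B γ) = P (E γ) * P (B γ) :=
    (Indep_iff _ _ P).mp (indep_biSup_compl (fun v => (hX v).comap_le) hind.iIndep (F γ))
      _ _ (hE γ) (hB γ)
  calc P (⋃ γ, E γ ∩ B γ) ≤ ∑' γ, P (E γ ∩ B γ) := measure_iUnion_le _
    _ = ∑' γ, P (E γ) * P (B γ) := tsum_congr hsplit
    _ ≤ ∑' γ, P (E γ) * P C := ENNReal.tsum_le_tsum fun γ => by gcongr; exact hBC γ
    _ = P (⋃ γ, E γ) * P C := by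
      rw [ENNReal.tsum_mul_right, measure_iUnion hdisj fun γ => sigmaOn_le hX _ _ (hE γ)]
    _ ≤ P A * P C := by gcongr; exact Set.iUnion_subset hEA

end DisjointOccurrence

section Lineages

variable {Ω : Type} {R : ℤ → Ω → ℕ} {ω : Ω} {x y z : ℤ}

theorem par_le_id (R : ℤ → Ω → ℕ) (ω : Ω) : par R ω ≤ id := fun x => by simp [par]

theorem rel.symm (h : rel R ω x y) : rel R ω y x :=
  let ⟨m, n, h⟩ := h; ⟨n, m, h.symm⟩

theorem rel.trans (h₁ : rel R ω x y) (h₂ : rel R ω y z) : rel R ω x z := by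
  obtain ⟨a, b, h₁⟩ := h₁
  obtain ⟨c, d, h₂⟩ := h₂
  refine ⟨c + a, b + d, ?_⟩
  rw [Function.iterate_add_apply, h₁, ← Function.iterate_add_apply, add_comm c b,
    Function.iterate_add_apply, h₂, ← Function.iterate_add_apply]

theorem rel_iterate_self (x : ℤ) (s : ℕ) : rel R ω ((par R ω)^[s] x) x := ⟨0, s, rfl⟩

def meetEvent (R : ℤ → Ω → ℕ) (γ : List ℤ × List ℤ) : Set Ω :=
  {ω | IsOrbitSegment (par R ω) γ.1 ∧ IsOrbitSegment (par R ω) γ.2}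

def meetWithin (R : ℤ → Ω → ℕ) (x y : ℤ) (S : Set ℤ) : Set Ω :=
  ⋃ (γ) (_ : IsMeetingWitness x y γ ∧ sites γ ⊆ S), meetEvent R γ

theorem measurableSet_isOrbitSegment (R : ℤ → Ω → ℕ) {S : Set ℤ} {l : List ℤ}
    (hl : ∀ v ∈ l, v ∈ S) : MeasurableSet[sigmaOn R S] {ω | IsOrbitSegment (par R ω) l} := by
  induction l with
  | nil => simp [IsOrbitSegment]
  | cons b t ih =>
    cases t with
    | nil => simp [IsOrbitSegment]
    | cons c t =>
      have hsplit : {ω | IsOrbitSegment (par R ω) (b :: c :: t)} =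
          R b ⁻¹' {r | b - r = c} ∩ {ω | IsOrbitSegment (par R ω) (c :: t)} := by
        ext ω
        simp [IsOrbitSegment, par]
      rw [hsplit]
      exact (measurableSet_sigmaOn_preimage (hl b (by simp)) .of_discrete).inter
        (ih fun v hv => hl v (List.mem_cons_of_mem b hv))

theorem measurableSet_meetEvent (R : ℤ → Ω → ℕ) {γ : List ℤ × List ℤ} {S : Set ℤ}
    (h : sites γ ⊆ S) : MeasurableSet[sigmaOn R S] (meetEvent R γ) :=
  (measurableSet_isOrbitSegment R fun _ hv => h (Or.inl hv)).inter
    (measurableSet_isOrbitSegment R fun _ hv => h (Or.inr hv))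

theorem measurableSet_meetWithin (R : ℤ → Ω → ℕ) (x y : ℤ) (S : Set ℤ) :
    MeasurableSet[sigmaOn R S] (meetWithin R x y S) :=
  .iUnion fun _ => .iUnion fun h => measurableSet_meetEvent R h.2

theorem meetEvent_subset_rel {γ : List ℤ × List ℤ} (hγ : IsMeetingWitness x y γ) :
    meetEvent R γ ⊆ {ω | rel R ω x y} := fun _ hω =>
  let ⟨m, n, _, h⟩ := hγ.exists_eq_iterate hω; ⟨m, n, h.1⟩

theorem meetWithin_subset_rel {S : Set ℤ} : meetWithin R x y S ⊆ {ω | rel R ω x y} :=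
  Set.iUnion₂_subset fun _ h => meetEvent_subset_rel h.1

theorem disjoint_meetEvent {γ γ' : List ℤ × List ℤ} (hγ : IsMeetingWitness x y γ)
    (hγ' : IsMeetingWitness x y γ') (hne : γ ≠ γ') : Disjoint (meetEvent R γ) (meetEvent R γ') :=
  Set.disjoint_left.mpr fun ω h h' => hne (hγ.eq_of_isOrbitSegment (par_le_id R ω) hγ' h h')

theorem exists_mem_meetEvent_of_rel (h : rel R ω x y) :
    ∃ γ, IsMeetingWitness x y γ ∧ ω ∈ meetEvent R γ ∧ ∀ v ∈ sites γ, rel R ω v x := by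
  obtain ⟨m, n, hmn⟩ := exists_isFirstMeeting h
  refine ⟨_, isMeetingWitness_iterate_iff.mpr hmn,
    ⟨isOrbitSegment_iterate _ _ _, isOrbitSegment_iterate _ _ _⟩, ?_⟩
  rintro v (hv | hv) <;> obtain ⟨s, -, rfl⟩ := List.mem_iterate.mp hv
  · exact rel_iterate_self x s
  · exact (rel_iterate_self y s).trans h.symm

theorem exists_mem_meetEvent_inter_meetWithin {i j k l : ℤ} (hik : rel R ω i k)
    (hjl : rel R ω j l) (hkj : ¬ rel R ω k j) :
    ∃ γ, IsMeetingWitness i k γ ∧ ω ∈ meetEvent R γ ∩ meetWithin R j l (sites γ)ᶜ := by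
  obtain ⟨γ, hγ, hωγ, hγi⟩ := exists_mem_meetEvent_of_rel hik
  obtain ⟨δ, hδ, hωδ, hδj⟩ := exists_mem_meetEvent_of_rel hjl
  refine ⟨γ, hγ, hωγ, Set.mem_biUnion ⟨hδ, fun v hvδ hvγ => hkj ?_⟩ hωδ⟩
  exact hik.symm.trans ((hγi v hvγ).symm.trans (hδj v hvδ))

end Lineages

theorem coalescence_in_distinct_components_le_general
    {Ω : Type} [MeasurableSpace Ω] (P : Measure Ω)
    (R : ℤ → Ω → ℕ)
    (hmeas : ∀ i, Measurable (R i))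
    (hindep : iIndepFun R P)
    (i j k l : ℤ) :
    (P {ω | rel R ω i k ∧ rel R ω j l ∧ ¬ rel R ω k j}).toReal
      ≤ (P {ω | rel R ω i k}).toReal * (P {ω | rel R ω j l}).toReal := by
  have hcover : {ω | rel R ω i k ∧ rel R ω j l ∧ ¬ rel R ω k j} ⊆
      ⋃ γ : {γ // IsMeetingWitness i k γ}, meetEvent R γ.1 ∩ meetWithin R j l (sites γ.1)ᶜ := by
    rintro ω ⟨hik, hjl, hkj⟩
    obtain ⟨γ, hγ, hω⟩ := exists_mem_meetEvent_inter_meetWithin hik hjl hkj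
    exact Set.mem_iUnion.mpr ⟨⟨γ, hγ⟩, hω⟩
  have hle := (measure_mono hcover).trans <| measure_iUnion_inter_le_mul hmeas hindep
    (fun _ => measurableSet_meetEvent R le_rfl) (fun _ => measurableSet_meetWithin R j l _)
    (fun γ γ' hne => disjoint_meetEvent γ.2 γ'.2 (Subtype.coe_injective.ne hne))
    (fun γ => meetEvent_subset_rel γ.2) fun _ => meetWithin_subset_rel
  have := hindep.isProbabilityMeasure
  rw [← ENNReal.toReal_mul]
  exact ENNReal.toReal_mono (by finiteness) hle

/-- For any probability measure `μ` on `ℕ = {1,2,…}` and the random equivalence relation `∼`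
generated by the coalescing renewal processes, for pairwise distinct `i,j,k,ℓ ∈ ℤ`,
`P(i ∼ k ≁ j ∼ ℓ) ≤ P(i ∼ k) P(j ∼ ℓ)` (the event being that `i ∼ k`, `j ∼ ℓ`, but the
component of `i,k` is distinct from the component of `j,ℓ`). -/
theorem coalescence_in_distinct_components_le
    {Ω : Type} [MeasurableSpace Ω] (P : Measure Ω) (μ : Measure ℕ)
    (R : ℤ → Ω → ℕ)
    (hP : IsProbabilityMeasure P) (hμprob : IsProbabilityMeasure μ) (hμ0 : μ {0} = 0)
    (hmeas : ∀ i, Measurable (R i))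
    (hindep : iIndepFun R P)
    (hlaw : ∀ i, Measure.map (R i) P = μ)
    (i j k l : ℤ)
    (hij : i ≠ j) (hik : i ≠ k) (hil : i ≠ l) (hjk : j ≠ k) (hjl : j ≠ l) (hkl : k ≠ l) :
    (P {ω | rel R ω i k ∧ rel R ω j l ∧ ¬ rel R ω k j}).toReal
      ≤ (P {ω | rel R ω i k}).toReal * (P {ω | rel R ω j l}).toReal :=
  coalescence_in_distinct_components_le_general P R hmeas hindep i j k l
end
end
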